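/- Let S be a compact codimension-two spacelike submanifold of a spacetime (M,g) and ζ a Killing vector field of g. If the mean curvature vector H of S satisfies g(H, ζ) < 0 everywhere on S (e.g., S trapped with H future timelike and ζ future timelike), then we reach a contradiction with the first variation of area: since the flow of ζ is by isometries, dA(S_t)/dt|_{t=0} = 0, but the first variation formula gives dA(S_t)/dt|_{t=0} = ∫_S g(H,ζ) dS < 0. Hence no closed trapped surface exists in an open region admitting a future timelike Killing field whose flow preserves the region. -/
import Mathlib


open MeasureTheory

/-- No closed trapped surface in a region with a (future timelike) Killing
field: abstract form. Let `S` be the (compact) surface carrying its nonzero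
finite area measure `μ`, `φ = g(H,ζ)` the (integrable) pointwise inner product
of the mean curvature vector with the Killing field, negative everywhere
(e.g. `H` future timelike and `ζ` future timelike). The first variation of
area gives `dA(S_t)/dt|₀ = ∫_S g(H,ζ) dμ`, while the flow of the Killing field
is by isometries, so `A` is constant. These are contradictory. -/
theorem no_trapped_surface_with_killing_field {S : Type*} [MeasurableSpace S]
    (μ : Measure S) [IsFiniteMeasure μ] (hμ : μ ≠ 0)
    (A : ℝ → ℝ) (φ : S → ℝ)
    (hint : Integrable φ μ)
    (hneg : ∀ x : S, φ x < 0)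
    (hfirstvar : HasDerivAt A (∫ x, φ x ∂μ) 0)
    (hisom : ∀ t : ℝ, A t = A 0) :
    False := by
  have hA : A = fun _ => A 0 := funext hisom
  have h0 : HasDerivAt A 0 0 := by
    rw [hA]; exact hasDerivAt_const 0 (A 0)
  have heq : (∫ x, φ x ∂μ) = 0 := by
    have := hfirstvar.unique h0
    simpa using this
  have hpos : 0 < ∫ x, (-φ) x ∂μ := by
    rw [integral_pos_iff_support_of_nonneg_ae]
    · have : Function.support (-φ) = Set.univ := by
        ext x; simp [sub_eq_zero, (hneg x).ne]
      rw [this]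
      simpa [Measure.measure_univ_eq_zero] using hμ
    · filter_upwards with x
      simpa using (hneg x).le
    · exact hint.neg
  simp only [Pi.neg_apply, integral_neg, heq] at hpos
  simp at hpos
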